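/- Let n ≥ 2 be an integer. Suppose smooth functions f_{1i}, f_{2i} (for i = 1, …, n−1), f₃, f₄, ρ : ℝ^{2n} → ℝ satisfy, for every index i, the per-index conformal system on ℂHⁿ. Then ρ is identically zero; that is, every conformal vector field on the complex hyperbolic space ℂHⁿ is a Killing vector field. -/

import Mathlib

open Real

/-- Functions on `ℝ^{2n}` with coordinates `(x¹,…,x^{n−1}, y¹,…,y^{n−1}, z, a)`,
written in curried form. -/
abbrev FunCHn (n : ℕ) := (Fin (n - 1) → ℝ) → (Fin (n - 1) → ℝ) → ℝ → ℝ → ℝ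

/-- Partial derivative with respect to the coordinate `xⁱ`. -/
noncomputable def pxI {n : ℕ} (f : FunCHn n) (i : Fin (n - 1))
    (x y : Fin (n - 1) → ℝ) (z a : ℝ) : ℝ :=
  deriv (fun t => f (Function.update x i t) y z a) (x i)

/-- Partial derivative with respect to the coordinate `yⁱ`. -/
noncomputable def pyI {n : ℕ} (f : FunCHn n) (i : Fin (n - 1))
    (x y : Fin (n - 1) → ℝ) (z a : ℝ) : ℝ :=
  deriv (fun t => f x (Function.update y i t) z a) (y i)

/-- Partial derivative with respect to the coordinate `z`. -/
noncomputable def pzN {n : ℕ} (f : FunCHn n) (x y : Fin (n - 1) → ℝ) (z a : ℝ) : ℝ :=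
  deriv (fun t => f x y t a) z

/-- Partial derivative with respect to the coordinate `a`. -/
noncomputable def paN {n : ℕ} (f : FunCHn n) (x y : Fin (n - 1) → ℝ) (z a : ℝ) : ℝ :=
  deriv (fun t => f x y z t) a

/-- Smoothness of a function on `ℝ^{2n}`. -/
def SmoothCHn {n : ℕ} (f : FunCHn n) : Prop :=
  ContDiff ℝ (⊤ : ℕ∞)
    (fun p : (Fin (n - 1) → ℝ) × (Fin (n - 1) → ℝ) × ℝ × ℝ =>
      f p.1 p.2.1 p.2.2.1 p.2.2.2)

/-- The per-index conformal system on `ℂHⁿ` for the index `i`, expressing that the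
vector field `ξ = Σᵢ (f₁ᵢ Vᵢ + f₂ᵢ J_Z Vᵢ) + f₃ Z + f₄ A` is conformal with
potential function `ρ`. -/
def PerIndexConformalSystem {n : ℕ} (f₁ f₂ f₃ f₄ ρ : FunCHn n) (i : Fin (n - 1)) : Prop :=
  ∀ (x y : Fin (n - 1) → ℝ) (z a : ℝ),
    2 * exp (a / 2) * (pxI f₁ i x y z a - (y i / 2) * pzN f₁ x y z a) - f₄ x y z a
        = 2 * ρ x y z a ∧
    exp (a / 2) * (pyI f₁ i x y z a + (x i / 2) * pzN f₁ x y z a)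
        + exp (a / 2) * (pxI f₂ i x y z a - (y i / 2) * pzN f₂ x y z a) = 0 ∧
    2 * exp (a / 2) * (pyI f₂ i x y z a + (x i / 2) * pzN f₂ x y z a) - f₄ x y z a
        = 2 * ρ x y z a ∧
    exp a * pzN f₁ x y z a
        + exp (a / 2) * (pxI f₃ i x y z a - (y i / 2) * pzN f₃ x y z a) + f₂ x y z a = 0 ∧
    exp a * pzN f₂ x y z a
        + exp (a / 2) * (pyI f₃ i x y z a + (x i / 2) * pzN f₃ x y z a) - f₁ x y z a = 0 ∧
    exp a * pzN f₃ x y z a - f₄ x y z a = ρ x y z a ∧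
    paN f₁ x y z a
        + exp (a / 2) * (pxI f₄ i x y z a - (y i / 2) * pzN f₄ x y z a)
        + f₁ x y z a / 2 = 0 ∧
    paN f₂ x y z a
        + exp (a / 2) * (pyI f₄ i x y z a + (x i / 2) * pzN f₄ x y z a)
        + f₂ x y z a / 2 = 0 ∧
    paN f₃ x y z a + exp a * pzN f₄ x y z a + f₃ x y z a = 0 ∧
    paN f₄ x y z a = ρ x y z a


noncomputable section
abbrev E4 := ℝ × ℝ × ℝ × ℝ
abbrev Sm (f : E4 → ℝ) : Prop := ContDiff ℝ (⊤ : ℕ∞) f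
def Dv (v : E4) (f : E4 → ℝ) : E4 → ℝ := fun p => fderiv ℝ f p v

def e1 : E4 := (1,0,0,0)
def e2 : E4 := (0,1,0,0)
def e3 : E4 := (0,0,1,0)
def e4 : E4 := (0,0,0,1)

lemma Sm.dv {f : E4 → ℝ} (hf : Sm f) (v : E4) : Sm (Dv v f) := by
  have h1 : ContDiff ℝ (⊤ : ℕ∞) (fderiv ℝ f) := hf.fderiv_right (by simp)
  exact h1.clm_apply contDiff_const

lemma Sm.diffAt {f : E4 → ℝ} (hf : Sm f) (p : E4) : DifferentiableAt ℝ f p :=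
  (hf.differentiable (by simp)).differentiableAt

lemma dv_comm {f : E4 → ℝ} (hf : Sm f) (v w : E4) (p : E4) :
    Dv v (Dv w f) p = Dv w (Dv v f) p := by
  have hf' : ContDiff ℝ (⊤ : ℕ∞) (fderiv ℝ f) := hf.fderiv_right (by simp)
  have hd : ∀ u u' : E4, Dv u (Dv u' f) p = fderiv ℝ (fderiv ℝ f) p u u' := by
    intro u u'
    have h0 : Dv u (Dv u' f) p
        = fderiv ℝ (fun q => (fderiv ℝ f q) u') p u := rfl
    rw [h0, fderiv_clm_apply (hf'.differentiable (by simp) p)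
        (differentiableAt_const u')]
    simp
  rw [hd v w, hd w v]
  exact second_derivative_symmetric (f := f) (fun y => (hf.diffAt y).hasFDerivAt)
    ((hf'.differentiable (by simp) p).hasFDerivAt) v w

lemma dv_add {f g : E4 → ℝ} (hf : Sm f) (hg : Sm g) (v : E4) (p : E4) :
    Dv v (fun q => f q + g q) p = Dv v f p + Dv v g p := by
  unfold Dv; rw [fderiv_fun_add (hf.diffAt p) (hg.diffAt p)]; simp

lemma dv_sub {f g : E4 → ℝ} (hf : Sm f) (hg : Sm g) (v : E4) (p : E4) :
    Dv v (fun q => f q - g q) p = Dv v f p - Dv v g p := by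
  unfold Dv; rw [fderiv_fun_sub (hf.diffAt p) (hg.diffAt p)]; simp

lemma dv_mul {f g : E4 → ℝ} (hf : Sm f) (hg : Sm g) (v : E4) (p : E4) :
    Dv v (fun q => f q * g q) p = f p * Dv v g p + g p * Dv v f p := by
  unfold Dv; rw [fderiv_fun_mul (hf.diffAt p) (hg.diffAt p)]; simp

lemma dv_const_mul {f : E4 → ℝ} (hf : Sm f) (c : ℝ) (v : E4) (p : E4) :
    Dv v (fun q => c * f q) p = c * Dv v f p := by
  unfold Dv; rw [fderiv_const_mul (hf.diffAt p)]; simp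

-- coefficient functions
def cE : E4 → ℝ := fun p => exp (p.2.2.2 / 2)
def cE2 : E4 → ℝ := fun p => exp p.2.2.2

lemma smA : Sm (fun p : E4 => p.2.2.2) :=
  (contDiff_snd.comp (contDiff_snd.comp contDiff_snd) : _)
lemma smX : Sm (fun p : E4 => p.1) := contDiff_fst
lemma smY : Sm (fun p : E4 => p.2.1) := contDiff_fst.comp contDiff_snd
lemma smCE : Sm cE := Real.contDiff_exp.comp (smA.div_const 2)
lemma smCE2 : Sm cE2 := Real.contDiff_exp.comp smA

def LA : E4 →L[ℝ] ℝ :=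
  (ContinuousLinearMap.snd ℝ ℝ ℝ).comp ((ContinuousLinearMap.snd ℝ ℝ (ℝ × ℝ)).comp
    (ContinuousLinearMap.snd ℝ ℝ (ℝ × ℝ × ℝ)))
def LX : E4 →L[ℝ] ℝ := ContinuousLinearMap.fst ℝ ℝ (ℝ × ℝ × ℝ)
def LY : E4 →L[ℝ] ℝ :=
  (ContinuousLinearMap.fst ℝ ℝ (ℝ × ℝ)).comp (ContinuousLinearMap.snd ℝ ℝ (ℝ × ℝ × ℝ))

lemma dv_X (v : E4) (p : E4) : Dv v (fun q : E4 => q.1) p = v.1 := by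
  have : Dv v (fun q : E4 => q.1) p = fderiv ℝ (⇑LX) p v := rfl
  rw [this, LX.fderiv]; rfl
lemma dv_Y (v : E4) (p : E4) : Dv v (fun q : E4 => q.2.1) p = v.2.1 := by
  have : Dv v (fun q : E4 => q.2.1) p = fderiv ℝ (⇑LY) p v := rfl
  rw [this, LY.fderiv]; rfl
lemma dv_A (v : E4) (p : E4) : Dv v (fun q : E4 => q.2.2.2) p = v.2.2.2 := by
  have : Dv v (fun q : E4 => q.2.2.2) p = fderiv ℝ (⇑LA) p v := rfl
  rw [this, LA.fderiv]; rfl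

lemma dv_cE (v : E4) (p : E4) : Dv v cE p = v.2.2.2 / 2 * cE p := by
  have h1 : HasFDerivAt (fun q : E4 => q.2.2.2 / 2) ((1/2 : ℝ) • LA) p := by
    have := LA.hasFDerivAt (x := p) |>.const_smul (R := ℝ) (2⁻¹ : ℝ)
    have e : (fun q : E4 => q.2.2.2 / 2) = (2⁻¹ : ℝ) • ⇑LA := by
      funext q
      show q.2.2.2 / 2 = 2⁻¹ * q.2.2.2; ring
    rw [e, one_div]; exact this
  have h2 := (Real.hasDerivAt_exp (p.2.2.2 / 2)).comp_hasFDerivAt p h1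
  have h2' : HasFDerivAt cE (exp (p.2.2.2/2) • ((1/2 : ℝ) • LA)) p := h2
  have : Dv v cE p = (exp (p.2.2.2/2) • ((1/2 : ℝ) • LA)) v := by
    unfold Dv; rw [h2'.fderiv]
  rw [this]; show exp (p.2.2.2/2) * ((1/2) * LA v) = _
  show exp (p.2.2.2/2) * ((1/2) * v.2.2.2) = _
  unfold cE; ring

lemma dv_cE2 (v : E4) (p : E4) : Dv v cE2 p = v.2.2.2 * cE2 p := by
  have h2 := (Real.hasDerivAt_exp p.2.2.2).comp_hasFDerivAt p (LA.hasFDerivAt (x := p))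
  have h2' : HasFDerivAt cE2 (exp p.2.2.2 • LA) p := h2
  have : Dv v cE2 p = (exp p.2.2.2 • LA) v := by
    unfold Dv; rw [h2'.fderiv]
  rw [this]; show exp p.2.2.2 * LA v = _
  show exp p.2.2.2 * v.2.2.2 = _
  unfold cE2; ring

lemma dv_Y2 (v : E4) (p : E4) : Dv v (fun q : E4 => q.2.1 / 2) p = v.2.1 / 2 := by
  have h : (fun q : E4 => q.2.1 / 2) = fun q : E4 => (1/2 : ℝ) * q.2.1 := by
    funext q; ring
  rw [h, dv_const_mul smY, dv_Y]; ring

lemma dv_X2 (v : E4) (p : E4) : Dv v (fun q : E4 => q.1 / 2) p = v.1 / 2 := by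
  have h : (fun q : E4 => q.1 / 2) = fun q : E4 => (1/2 : ℝ) * q.1 := by
    funext q; ring
  rw [h, dv_const_mul smX, dv_X]; ring

-- the frame operators
def Vo (f : E4 → ℝ) : E4 → ℝ := fun p => cE p * (Dv e1 f p - p.2.1 / 2 * Dv e3 f p)
def Wo (f : E4 → ℝ) : E4 → ℝ := fun p => cE p * (Dv e2 f p + p.1 / 2 * Dv e3 f p)
def Zo (f : E4 → ℝ) : E4 → ℝ := fun p => cE2 p * Dv e3 f p
def Ao (f : E4 → ℝ) : E4 → ℝ := Dv e4 f

lemma Sm.vo {f : E4 → ℝ} (hf : Sm f) : Sm (Vo f) :=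
  smCE.mul ((hf.dv e1).sub ((smY.div_const 2).mul (hf.dv e3)))
lemma Sm.wo {f : E4 → ℝ} (hf : Sm f) : Sm (Wo f) :=
  smCE.mul ((hf.dv e2).add ((smX.div_const 2).mul (hf.dv e3)))
lemma Sm.zo {f : E4 → ℝ} (hf : Sm f) : Sm (Zo f) := smCE2.mul (hf.dv e3)
lemma Sm.ao {f : E4 → ℝ} (hf : Sm f) : Sm (Ao f) := hf.dv e4

lemma dv_Vo {f : E4 → ℝ} (hf : Sm f) (v p : E4) :
    Dv v (Vo f) p = v.2.2.2 / 2 * cE p * (Dv e1 f p - p.2.1 / 2 * Dv e3 f p)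
      + cE p * (Dv v (Dv e1 f) p
        - (v.2.1 / 2 * Dv e3 f p + p.2.1 / 2 * Dv v (Dv e3 f) p)) := by
  have hg : Sm (fun q => Dv e1 f q - q.2.1 / 2 * Dv e3 f q) :=
    (hf.dv e1).sub ((smY.div_const 2).mul (hf.dv e3))
  have h0 : Vo f = fun q => cE q * (fun q => Dv e1 f q - q.2.1 / 2 * Dv e3 f q) q := rfl
  rw [h0, dv_mul smCE hg v p, dv_cE]
  have h1 : Dv v (fun q => Dv e1 f q - q.2.1 / 2 * Dv e3 f q) p
      = Dv v (Dv e1 f) p - (v.2.1 / 2 * Dv e3 f p + p.2.1 / 2 * Dv v (Dv e3 f) p) := by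
    rw [dv_sub (hf.dv e1) ((smY.div_const 2).mul (hf.dv e3))]
    have h2 : Dv v (fun q => q.2.1 / 2 * Dv e3 f q) p
        = p.2.1 / 2 * Dv v (Dv e3 f) p + Dv e3 f p * (v.2.1 / 2) := by
      have := dv_mul (f := fun q : E4 => q.2.1 / 2) (g := Dv e3 f)
        (smY.div_const 2) (hf.dv e3) v p
      rw [this, dv_Y2]
    rw [h2]; ring
  rw [h1]; ring

lemma dv_Wo {f : E4 → ℝ} (hf : Sm f) (v p : E4) :
    Dv v (Wo f) p = v.2.2.2 / 2 * cE p * (Dv e2 f p + p.1 / 2 * Dv e3 f p)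
      + cE p * (Dv v (Dv e2 f) p
        + (v.1 / 2 * Dv e3 f p + p.1 / 2 * Dv v (Dv e3 f) p)) := by
  have hg : Sm (fun q => Dv e2 f q + q.1 / 2 * Dv e3 f q) :=
    (hf.dv e2).add ((smX.div_const 2).mul (hf.dv e3))
  have h0 : Wo f = fun q => cE q * (fun q => Dv e2 f q + q.1 / 2 * Dv e3 f q) q := rfl
  rw [h0, dv_mul smCE hg v p, dv_cE]
  have h1 : Dv v (fun q => Dv e2 f q + q.1 / 2 * Dv e3 f q) p
      = Dv v (Dv e2 f) p + (v.1 / 2 * Dv e3 f p + p.1 / 2 * Dv v (Dv e3 f) p) := by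
    rw [dv_add (hf.dv e2) ((smX.div_const 2).mul (hf.dv e3))]
    have h2 : Dv v (fun q => q.1 / 2 * Dv e3 f q) p
        = p.1 / 2 * Dv v (Dv e3 f) p + Dv e3 f p * (v.1 / 2) := by
      have := dv_mul (f := fun q : E4 => q.1 / 2) (g := Dv e3 f)
        (smX.div_const 2) (hf.dv e3) v p
      rw [this, dv_X2]
    rw [h2]; ring
  rw [h1]; ring

lemma dv_Zo {f : E4 → ℝ} (hf : Sm f) (v p : E4) :
    Dv v (Zo f) p = v.2.2.2 * cE2 p * Dv e3 f p + cE2 p * Dv v (Dv e3 f) p := by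
  have h0 : Zo f = fun q => cE2 q * Dv e3 f q := rfl
  rw [h0, dv_mul smCE2 (hf.dv e3) v p, dv_cE2]; ring

lemma cE_sq (p : E4) : cE p * cE p = cE2 p := by
  unfold cE cE2; rw [← Real.exp_add]; ring_nf

@[simp] lemma e1c : (e1.1, e1.2.1, e1.2.2.1, e1.2.2.2) = ((1:ℝ),(0:ℝ),(0:ℝ),(0:ℝ)) := rfl
@[simp] lemma e1_1 : e1.1 = 1 := rfl
@[simp] lemma e1_y : e1.2.1 = 0 := rfl
@[simp] lemma e1_a : e1.2.2.2 = 0 := rfl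
@[simp] lemma e2_1 : e2.1 = 0 := rfl
@[simp] lemma e2_y : e2.2.1 = 1 := rfl
@[simp] lemma e2_a : e2.2.2.2 = 0 := rfl
@[simp] lemma e3_1 : e3.1 = 0 := rfl
@[simp] lemma e3_y : e3.2.1 = 0 := rfl
@[simp] lemma e3_a : e3.2.2.2 = 0 := rfl
@[simp] lemma e4_1 : e4.1 = 0 := rfl
@[simp] lemma e4_y : e4.2.1 = 0 := rfl
@[simp] lemma e4_a : e4.2.2.2 = 1 := rfl

lemma comm_AV {f : E4 → ℝ} (hf : Sm f) :
    Ao (Vo f) = fun p => Vo (Ao f) p + (1/2) * Vo f p := by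
  funext p
  have hL : Ao (Vo f) p = Dv e4 (Vo f) p := rfl
  rw [hL, dv_Vo hf e4 p]
  show _ = cE p * (Dv e1 (Dv e4 f) p - p.2.1/2 * Dv e3 (Dv e4 f) p)
      + (1/2) * (cE p * (Dv e1 f p - p.2.1/2 * Dv e3 f p))
  rw [dv_comm hf e4 e1 p, dv_comm hf e4 e3 p]
  simp only [e4_1, e4_y, e4_a]; ring

lemma comm_AW {f : E4 → ℝ} (hf : Sm f) :
    Ao (Wo f) = fun p => Wo (Ao f) p + (1/2) * Wo f p := by
  funext p
  have hL : Ao (Wo f) p = Dv e4 (Wo f) p := rfl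
  rw [hL, dv_Wo hf e4 p]
  show _ = cE p * (Dv e2 (Dv e4 f) p + p.1/2 * Dv e3 (Dv e4 f) p)
      + (1/2) * (cE p * (Dv e2 f p + p.1/2 * Dv e3 f p))
  rw [dv_comm hf e4 e2 p, dv_comm hf e4 e3 p]
  simp only [e4_1, e4_y, e4_a]; ring

lemma comm_AZ {f : E4 → ℝ} (hf : Sm f) :
    Ao (Zo f) = fun p => Zo (Ao f) p + Zo f p := by
  funext p
  have hL : Ao (Zo f) p = Dv e4 (Zo f) p := rfl
  rw [hL, dv_Zo hf e4 p]
  show _ = cE2 p * Dv e3 (Dv e4 f) p + cE2 p * Dv e3 f p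
  rw [dv_comm hf e4 e3 p]
  simp only [e4_a]; ring

lemma comm_VZ {f : E4 → ℝ} (hf : Sm f) :
    Vo (Zo f) = Zo (Vo f) := by
  funext p
  have hL : Vo (Zo f) p
      = cE p * (Dv e1 (Zo f) p - p.2.1/2 * Dv e3 (Zo f) p) := rfl
  have hR : Zo (Vo f) p = cE2 p * Dv e3 (Vo f) p := rfl
  rw [hL, hR, dv_Zo hf e1 p, dv_Zo hf e3 p, dv_Vo hf e3 p]
  rw [dv_comm hf e3 e1 p]
  simp only [e1_a, e3_a, e3_y, e3_1]; ring

lemma comm_WZ {f : E4 → ℝ} (hf : Sm f) :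
    Wo (Zo f) = Zo (Wo f) := by
  funext p
  have hL : Wo (Zo f) p
      = cE p * (Dv e2 (Zo f) p + p.1/2 * Dv e3 (Zo f) p) := rfl
  have hR : Zo (Wo f) p = cE2 p * Dv e3 (Wo f) p := rfl
  rw [hL, hR, dv_Zo hf e2 p, dv_Zo hf e3 p, dv_Wo hf e3 p]
  rw [dv_comm hf e3 e2 p]
  simp only [e2_a, e3_a, e3_y, e3_1]; ring

lemma comm_VW {f : E4 → ℝ} (hf : Sm f) :
    Vo (Wo f) = fun p => Wo (Vo f) p + Zo f p := by
  funext p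
  have hL : Vo (Wo f) p
      = cE p * (Dv e1 (Wo f) p - p.2.1/2 * Dv e3 (Wo f) p) := rfl
  have hR : Wo (Vo f) p + Zo f p
      = cE p * (Dv e2 (Vo f) p + p.1/2 * Dv e3 (Vo f) p) + cE2 p * Dv e3 f p := rfl
  rw [hL, hR, dv_Wo hf e1 p, dv_Wo hf e3 p, dv_Vo hf e2 p, dv_Vo hf e3 p]
  rw [dv_comm hf e1 e2 p, dv_comm hf e1 e3 p, dv_comm hf e2 e3 p]
  simp only [e1_1, e1_y, e1_a, e2_1, e2_y, e2_a, e3_1, e3_y, e3_a]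
  rw [← cE_sq p]; ring

lemma Sm.cmul {f : E4 → ℝ} (hf : Sm f) (a : ℝ) : Sm (fun q => a * f q) :=
  contDiff_const.mul hf
lemma Sm.lin2 {f g : E4 → ℝ} (hf : Sm f) (hg : Sm g) (a b : ℝ) :
    Sm (fun q => a * f q + b * g q) := (hf.cmul a).add (hg.cmul b)
lemma Sm.lin3 {f g h : E4 → ℝ} (hf : Sm f) (hg : Sm g) (hh : Sm h) (a b c : ℝ) :
    Sm (fun q => a * f q + b * g q + c * h q) := (hf.lin2 hg a b).add (hh.cmul c)

lemma dv_lin2 {f g : E4 → ℝ} (hf : Sm f) (hg : Sm g) (a b : ℝ) (v p : E4) :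
    Dv v (fun q => a * f q + b * g q) p = a * Dv v f p + b * Dv v g p := by
  rw [dv_add (hf.cmul a) (hg.cmul b) v p, dv_const_mul hf a v p, dv_const_mul hg b v p]

lemma dv_lin3 {f g h : E4 → ℝ} (hf : Sm f) (hg : Sm g) (hh : Sm h) (a b c : ℝ) (v p : E4) :
    Dv v (fun q => a * f q + b * g q + c * h q) p
      = a * Dv v f p + b * Dv v g p + c * Dv v h p := by
  have := dv_add (f := fun q => a * f q + b * g q) (g := fun q => c * h q)
    (hf.lin2 hg a b) (hh.cmul c) v p
  rw [show (fun q => a * f q + b * g q + c * h q)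
      = fun q => (fun q => a * f q + b * g q) q + (fun q => c * h q) q from rfl, this,
    dv_lin2 hf hg a b v p, dv_const_mul hh c v p]

lemma dv_lin4 {f g h k : E4 → ℝ} (hf : Sm f) (hg : Sm g) (hh : Sm h) (hk : Sm k)
    (a b c d : ℝ) (v p : E4) :
    Dv v (fun q => a * f q + b * g q + c * h q + d * k q) p
      = a * Dv v f p + b * Dv v g p + c * Dv v h p + d * Dv v k p := by
  have := dv_add (f := fun q => a * f q + b * g q + c * h q) (g := fun q => d * k q)
    (hf.lin3 hg hh a b c) (hk.cmul d) v p
  rw [show (fun q => a * f q + b * g q + c * h q + d * k q)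
      = fun q => (fun q => a * f q + b * g q + c * h q) q + (fun q => d * k q) q from rfl,
    this, dv_lin3 hf hg hh a b c v p, dv_const_mul hk d v p]

lemma dv_cmul1 {f : E4 → ℝ} (hf : Sm f) (a : ℝ) (v p : E4) :
    Dv v (fun q => a * f q) p = a * Dv v f p := dv_const_mul hf a v p

section OpLin
variable {f g h k : E4 → ℝ}

lemma Vo_lin1 (hf : Sm f) (a : ℝ) :
    Vo (fun q => a * f q) = fun p => a * Vo f p := by
  funext p
  show cE p * (Dv e1 _ p - p.2.1 / 2 * Dv e3 _ p) = _
  rw [dv_cmul1 hf a e1 p, dv_cmul1 hf a e3 p]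
  show _ = a * (cE p * (Dv e1 f p - p.2.1 / 2 * Dv e3 f p)); ring

lemma Vo_lin2 (hf : Sm f) (hg : Sm g) (a b : ℝ) :
    Vo (fun q => a * f q + b * g q) = fun p => a * Vo f p + b * Vo g p := by
  funext p
  show cE p * (Dv e1 _ p - p.2.1 / 2 * Dv e3 _ p) = _
  rw [dv_lin2 hf hg a b e1 p, dv_lin2 hf hg a b e3 p]
  show _ = a * (cE p * (Dv e1 f p - p.2.1 / 2 * Dv e3 f p))
      + b * (cE p * (Dv e1 g p - p.2.1 / 2 * Dv e3 g p)); ring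

lemma Vo_lin4 (hf : Sm f) (hg : Sm g) (hh : Sm h) (hk : Sm k) (a b c d : ℝ) :
    Vo (fun q => a * f q + b * g q + c * h q + d * k q)
      = fun p => a * Vo f p + b * Vo g p + c * Vo h p + d * Vo k p := by
  funext p
  show cE p * (Dv e1 _ p - p.2.1 / 2 * Dv e3 _ p) = _
  rw [dv_lin4 hf hg hh hk a b c d e1 p, dv_lin4 hf hg hh hk a b c d e3 p]
  show _ = a * (cE p * (Dv e1 f p - p.2.1 / 2 * Dv e3 f p))
      + b * (cE p * (Dv e1 g p - p.2.1 / 2 * Dv e3 g p))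
      + c * (cE p * (Dv e1 h p - p.2.1 / 2 * Dv e3 h p))
      + d * (cE p * (Dv e1 k p - p.2.1 / 2 * Dv e3 k p)); ring

lemma Wo_lin2 (hf : Sm f) (hg : Sm g) (a b : ℝ) :
    Wo (fun q => a * f q + b * g q) = fun p => a * Wo f p + b * Wo g p := by
  funext p
  show cE p * (Dv e2 _ p + p.1 / 2 * Dv e3 _ p) = _
  rw [dv_lin2 hf hg a b e2 p, dv_lin2 hf hg a b e3 p]
  show _ = a * (cE p * (Dv e2 f p + p.1 / 2 * Dv e3 f p))
      + b * (cE p * (Dv e2 g p + p.1 / 2 * Dv e3 g p)); ring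

lemma Zo_lin1 (hf : Sm f) (a : ℝ) :
    Zo (fun q => a * f q) = fun p => a * Zo f p := by
  funext p
  show cE2 p * Dv e3 _ p = _
  rw [dv_cmul1 hf a e3 p]
  show _ = a * (cE2 p * Dv e3 f p); ring

lemma Zo_lin2 (hf : Sm f) (hg : Sm g) (a b : ℝ) :
    Zo (fun q => a * f q + b * g q) = fun p => a * Zo f p + b * Zo g p := by
  funext p
  show cE2 p * Dv e3 _ p = _
  rw [dv_lin2 hf hg a b e3 p]
  show _ = a * (cE2 p * Dv e3 f p) + b * (cE2 p * Dv e3 g p); ring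

lemma Ao_lin1 (hf : Sm f) (a : ℝ) :
    Ao (fun q => a * f q) = fun p => a * Ao f p := by
  funext p; exact dv_cmul1 hf a e4 p

lemma Ao_lin2 (hf : Sm f) (hg : Sm g) (a b : ℝ) :
    Ao (fun q => a * f q + b * g q) = fun p => a * Ao f p + b * Ao g p := by
  funext p; exact dv_lin2 hf hg a b e4 p

lemma Ao_lin3 (hf : Sm f) (hg : Sm g) (hh : Sm h) (a b c : ℝ) :
    Ao (fun q => a * f q + b * g q + c * h q)
      = fun p => a * Ao f p + b * Ao g p + c * Ao h p := by
  funext p; exact dv_lin3 hf hg hh a b c e4 p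

lemma Ao_lin4 (hf : Sm f) (hg : Sm g) (hh : Sm h) (hk : Sm k) (a b c d : ℝ) :
    Ao (fun q => a * f q + b * g q + c * h q + d * k q)
      = fun p => a * Ao f p + b * Ao g p + c * Ao h p + d * Ao k p := by
  funext p; exact dv_lin4 hf hg hh hk a b c d e4 p

lemma Wo_zero : Wo (fun _ : E4 => (0:ℝ)) = fun _ => (0:ℝ) := by
  funext p
  show cE p * (Dv e2 _ p + p.1 / 2 * Dv e3 _ p) = 0
  have hz : ∀ v : E4, Dv v (fun _ : E4 => (0:ℝ)) p = 0 := by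
    intro v; unfold Dv; rw [fderiv_const_apply]; simp
  rw [hz e2, hz e3]; ring
end OpLin

set_option maxHeartbeats 1000000 in
theorem core (g1 g2 g3 g4 r : E4 → ℝ)
    (hg1 : Sm g1) (hg2 : Sm g2) (hg3 : Sm g3) (hg4 : Sm g4) (hr : Sm r)
    (h1 : Vo g1 = fun p => 1 * r p + (1/2) * g4 p)
    (h2 : Wo g1 = fun p => (-1) * Vo g2 p)
    (h3 : Wo g2 = fun p => 1 * r p + (1/2) * g4 p)
    (h4 : Zo g1 = fun p => (-1) * Vo g3 p + (-1) * g2 p)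
    (h5 : Zo g2 = fun p => 1 * g1 p + (-1) * Wo g3 p)
    (h6 : Zo g3 = fun p => 1 * r p + 1 * g4 p)
    (h7 : Vo g4 = fun p => (-1) * Ao g1 p + (-1/2) * g1 p)
    (h8 : Wo g4 = fun p => (-1) * Ao g2 p + (-1/2) * g2 p)
    (h9 : Zo g4 = fun p => (-1) * Ao g3 p + (-1) * g3 p)
    (h10 : Ao g4 = r) :
    ∀ p, r p = 0 := by
  -- rearrangements
  have h2' : Vo g2 = fun p => (-1) * Wo g1 p := by
    funext p; have c := congrFun h2 p; linear_combination c
  have h4' : Vo g3 = fun p => (-1) * Zo g1 p + (-1) * g2 p := by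
    funext p; have c := congrFun h4 p; linear_combination c
  have h5' : Wo g3 = fun p => 1 * g1 p + (-1) * Zo g2 p := by
    funext p; have c := congrFun h5 p; linear_combination c
  have h8' : Ao g2 = fun p => (-1) * Wo g4 p + (-1/2) * g2 p := by
    funext p; have c := congrFun h8 p; linear_combination c
  have h9' : Ao g3 = fun p => (-1) * Zo g4 p + (-1) * g3 p := by
    funext p; have c := congrFun h9 p; linear_combination c
  -- S1 .. S4 : first derivatives of r in A-direction words
  have S1 : Ao (Vo g4) = fun p => (-1) * Ao (Ao g1) p + (-1/2) * Ao g1 p := by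
    rw [h7, Ao_lin2 hg1.ao hg1 (-1) (-1/2)]
  have S2 : Vo r = fun p => (-1) * Ao (Ao g1) p + (1/4) * g1 p := by
    funext p
    rw [← h10]
    have c1 := congrFun (comm_AV hg4) p
    have c2 := congrFun S1 p
    have c3 := congrFun h7 p
    linear_combination (-1) * c1 + c2 + (-1/2) * c3
  have S3a : Ao (Wo g4) = fun p => (-1) * Ao (Ao g2) p + (-1/2) * Ao g2 p := by
    rw [h8, Ao_lin2 hg2.ao hg2 (-1) (-1/2)]
  have S3 : Wo r = fun p => (-1) * Ao (Ao g2) p + (1/4) * g2 p := by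
    funext p
    rw [← h10]
    have c1 := congrFun (comm_AW hg4) p
    have c2 := congrFun S3a p
    have c3 := congrFun h8 p
    linear_combination (-1) * c1 + c2 + (-1/2) * c3
  have S4a : Ao (Zo g4) = fun p => (-1) * Ao (Ao g3) p + (-1) * Ao g3 p := by
    rw [h9, Ao_lin2 hg3.ao hg3 (-1) (-1)]
  have S4 : Zo r = fun p => (-1) * Ao (Ao g3) p + 1 * g3 p := by
    funext p
    rw [← h10]
    have c1 := congrFun (comm_AZ hg4) p
    have c2 := congrFun S4a p
    have c3 := congrFun h9 p
    linear_combination (-1) * c1 + c2 + (-1) * c3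
  -- S5 (M3) : V V g4
  have S5a : Vo (Vo g4) = fun p => (-1) * Vo (Ao g1) p + (-1/2) * Vo g1 p := by
    rw [h7, Vo_lin2 hg1.ao hg1 (-1) (-1/2)]
  have S5b : Ao (Vo g1) = fun p => 1 * Ao r p + (1/2) * Ao g4 p := by
    rw [h1, Ao_lin2 hr hg4 1 (1/2)]
  have S5b' : Ao (Vo g1) = fun p => 1 * Ao r p + (1/2) * r p := by
    funext p; have c1 := congrFun S5b p; have c2 := congrFun h10 p
    linear_combination c1 + (1/2) * c2
  have S5 : Vo (Vo g4) = fun p => (-1) * Ao r p + (-1/2) * r p := by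
    funext p
    have c1 := congrFun S5a p
    have c2 := congrFun (comm_AV hg1) p
    have c3 := congrFun S5b' p
    linear_combination c1 + c2 + (-1) * c3
  -- S6 (M5) : Z Z g4
  have S6a : Zo (Zo g4) = fun p => (-1) * Zo (Ao g3) p + (-1) * Zo g3 p := by
    rw [h9, Zo_lin2 hg3.ao hg3 (-1) (-1)]
  have S6b : Ao (Zo g3) = fun p => 1 * Ao r p + 1 * Ao g4 p := by
    rw [h6, Ao_lin2 hr hg4 1 1]
  have S6b' : Ao (Zo g3) = fun p => 1 * Ao r p + 1 * r p := by
    funext p; have c1 := congrFun S6b p; have c2 := congrFun h10 p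
    linear_combination c1 + c2
  have S6 : Zo (Zo g4) = fun p => (-1) * Ao r p + (-1) * r p := by
    funext p
    have c1 := congrFun S6a p
    have c2 := congrFun (comm_AZ hg3) p
    have c3 := congrFun S6b' p
    linear_combination c1 + c2 + (-1) * c3
  -- S7 (M0') and S7' (M0)
  have S7a : Ao (Wo g1) = fun p => (-1) * Ao (Vo g2) p := by
    rw [h2, Ao_lin1 hg2.vo (-1)]
  have S7c : Vo (Ao g2) = fun p => (-1) * Vo (Wo g4) p + (-1/2) * Vo g2 p := by
    rw [h8', Vo_lin2 hg4.wo hg2 (-1) (-1/2)]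
  have S7d : Wo (Vo g4) = fun p => (-1) * Wo (Ao g1) p + (-1/2) * Wo g1 p := by
    rw [h7, Wo_lin2 hg1.ao hg1 (-1) (-1/2)]
  have S7 : Ao (Wo g1) = fun p => (-1/2) * Ao g3 p + (-1/2) * g3 p := by
    funext p
    have c1 := congrFun S7a p
    have c2 := congrFun (comm_AV hg2) p
    have c3 := congrFun S7c p
    have c4 := congrFun (comm_VW hg4) p
    have c5 := congrFun S7d p
    have c6 := congrFun (comm_AW hg1) p
    have c7 := congrFun h9 p
    linear_combination (1/2) * c1 + (-1/2) * c2 + (-1/2) * c3 + (1/2) * c4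
      + (1/2) * c5 + (1/2) * c6 + (1/2) * c7
  have S7' : Ao (Vo g2) = fun p => (1/2) * Ao g3 p + (1/2) * g3 p := by
    funext p
    have c1 := congrFun S7a p
    have c2 := congrFun S7 p
    linear_combination c1 + (-1) * c2
  -- S8 (M2), S9
  have S8a : Zo (Ao g2) = fun p => (-1) * Zo (Wo g4) p + (-1/2) * Zo g2 p := by
    rw [h8', Zo_lin2 hg4.wo hg2 (-1) (-1/2)]
  have S8b : Wo (Zo g4) = fun p => (-1) * Wo (Ao g3) p + (-1) * Wo g3 p := by
    rw [h9, Wo_lin2 hg3.ao hg3 (-1) (-1)]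
  have S8c : Ao (Wo g3) = fun p => 1 * Ao g1 p + (-1) * Ao (Zo g2) p := by
    rw [h5', Ao_lin2 hg1 hg2.zo 1 (-1)]
  have S8 : Ao (Zo g2)
      = fun p => (1/2) * Ao g1 p + (1/4) * Wo g3 p + (1/4) * Zo g2 p := by
    funext p
    have c1 := congrFun S8a p
    have c2 := congrFun (comm_WZ hg4) p
    have c3 := congrFun S8b p
    have c4 := congrFun (comm_AW hg3) p
    have c5 := congrFun S8c p
    have c6 := congrFun (comm_AZ hg2) p
    linear_combination (1/2) * c1 + (1/2) * c2 + (-1/2) * c3 + (-1/2) * c4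
      + (1/2) * c5 + (1/2) * c6
  have S9 : Ao (Wo g3)
      = fun p => (1/2) * Ao g1 p + (-1/4) * Wo g3 p + (-1/4) * Zo g2 p := by
    funext p
    have c1 := congrFun S8c p
    have c2 := congrFun S8 p
    linear_combination c1 + (-1) * c2
  -- S10 (H2)
  have S10a : Vo (Vo r) = fun p => (-1) * Vo (Ao (Ao g1)) p + (1/4) * Vo g1 p := by
    rw [S2, Vo_lin2 hg1.ao.ao hg1 (-1) (1/4)]
  have S10b : Vo (Ao g1) = fun p => 1 * Ao (Vo g1) p + (-1/2) * Vo g1 p := by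
    funext p; have c := congrFun (comm_AV hg1) p; linear_combination (-1) * c
  have S10c : Ao (Vo (Ao g1))
      = fun p => 1 * Ao (Ao (Vo g1)) p + (-1/2) * Ao (Vo g1) p := by
    rw [S10b, Ao_lin2 hg1.vo.ao hg1.vo 1 (-1/2)]
  have S10d : Ao (Ao (Vo g1)) = fun p => 1 * Ao (Ao r) p + (1/2) * Ao r p := by
    rw [S5b', Ao_lin2 hr.ao hr 1 (1/2)]
  have S10 : Vo (Vo r)
      = fun p => (-1) * Ao (Ao r) p + (1/2) * Ao r p + (1/2) * r p := by
    funext p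
    have c1 := congrFun S10a p
    have c2 := congrFun (comm_AV hg1.ao) p
    have c3 := congrFun S10c p
    have c4 := congrFun S10d p
    have c5 := congrFun S10b p
    have c6 := congrFun S5b' p
    linear_combination c1 + c2 + (-1) * c3 + (-1) * c4 + (1/2) * c5 + c6
  -- S12 (M4)
  have S12a : Vo (Wo g3) = fun p => 1 * Vo g1 p + (-1) * Vo (Zo g2) p := by
    rw [h5', Vo_lin2 hg1 hg2.zo 1 (-1)]
  have S12b : Zo (Vo g2) = fun p => (-1) * Zo (Wo g1) p := by
    rw [h2', Zo_lin1 hg1.wo (-1)]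
  have S12c : Wo (Zo g1) = fun p => (-1) * Wo (Vo g3) p + (-1) * Wo g2 p := by
    rw [h4, Wo_lin2 hg3.vo hg2 (-1) (-1)]
  have S12 : Vo (Wo g3) = fun p => (1/2) * r p + (1/2) * g4 p := by
    funext p
    have c1 := congrFun S12a p
    have c2 := congrFun (comm_VZ hg2) p
    have c3 := congrFun S12b p
    have c4 := congrFun (comm_WZ hg1) p
    have c5 := congrFun S12c p
    have c6 := congrFun (comm_VW hg3) p
    have c7 := congrFun h1 p
    have c8 := congrFun h3 p
    have c9 := congrFun h6 p
    linear_combination (1/2) * c1 + (-1/2) * c2 + (-1/2) * c3 + (-1/2) * c4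
      + (1/2) * c5 + (1/2) * c6 + (1/2) * c7 + (-1/2) * c8 + (1/2) * c9
  -- S11 (H2')
  have S11b : Vo (Zo g3) = fun p => 1 * Vo r p + 1 * Vo g4 p := by
    rw [h6, Vo_lin2 hr hg4 1 1]
  have S11c : Zo (Vo g3) = fun p => (-1) * Zo (Zo g1) p + (-1) * Zo g2 p := by
    rw [h4', Zo_lin2 hg1.zo hg2 (-1) (-1)]
  have S11a : Vo r
      = fun p => (-1) * Zo (Zo g1) p + (-1) * Zo g2 p + 1 * Ao g1 p + (1/2) * g1 p := by
    funext p
    have c1 := congrFun S11b p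
    have c2 := congrFun (comm_VZ hg3) p
    have c3 := congrFun S11c p
    have c4 := congrFun h7 p
    linear_combination (-1) * c1 + c2 + c3 + (-1) * c4
  have S11d : Vo (Vo r)
      = fun p => (-1) * Vo (Zo (Zo g1)) p + (-1) * Vo (Zo g2) p
        + 1 * Vo (Ao g1) p + (1/2) * Vo g1 p := by
    rw [S11a, Vo_lin4 hg1.zo.zo hg2.zo hg1.ao hg1 (-1) (-1) 1 (1/2)]
  have S11e : Vo (Zo (Zo g1)) = Zo (Zo (Vo g1)) := by
    rw [comm_VZ hg1.zo, comm_VZ hg1]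
  have S11f : Zo (Vo g1) = fun p => 1 * Zo r p + (1/2) * Zo g4 p := by
    rw [h1, Zo_lin2 hr hg4 1 (1/2)]
  have S11g : Zo (Zo (Vo g1)) = fun p => 1 * Zo (Zo r) p + (1/2) * Zo (Zo g4) p := by
    rw [S11f, Zo_lin2 hr.zo hg4.zo 1 (1/2)]
  have S11 : Vo (Vo r)
      = fun p => (-1) * Zo (Zo r) p + (3/2) * Ao r p + (1/2) * r p := by
    funext p
    have c1 := congrFun S11d p
    have c2 := congrFun S11e p
    have c3 := congrFun S11g p
    have c4 := congrFun S6 p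
    have c5 := congrFun (comm_VZ hg2) p
    have c6 := congrFun S12b p
    have c7 := congrFun (comm_WZ hg1) p
    have c8 := congrFun S12c p
    have c9 := congrFun (comm_VW hg3) p
    have c10 := congrFun S12 p
    have c11 := congrFun h3 p
    have c12 := congrFun h6 p
    have c13 := congrFun (comm_AV hg1) p
    have c14 := congrFun S5b' p
    linear_combination c1 + (-1) * c2 + (-1) * c3 + (-1/2) * c4 + (-1) * c5
      + (-1) * c6 + (-1) * c7 + c8 + c9 + (-1) * c10 + (-1) * c11 + c12
      + (-1) * c13 + c14
  -- S13 (H1)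
  have S13a : Zo (Zo r) = fun p => (-1) * Zo (Ao (Ao g3)) p + 1 * Zo g3 p := by
    rw [S4, Zo_lin2 hg3.ao.ao hg3 (-1) 1]
  have S13b : Zo (Ao g3) = fun p => 1 * Ao (Zo g3) p + (-1) * Zo g3 p := by
    funext p; have c := congrFun (comm_AZ hg3) p; linear_combination (-1) * c
  have S13c : Ao (Zo (Ao g3))
      = fun p => 1 * Ao (Ao (Zo g3)) p + (-1) * Ao (Zo g3) p := by
    rw [S13b, Ao_lin2 hg3.zo.ao hg3.zo 1 (-1)]
  have S13d : Ao (Ao (Zo g3)) = fun p => 1 * Ao (Ao r) p + 1 * Ao r p := by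
    rw [S6b', Ao_lin2 hr.ao hr 1 1]
  have S13 : Zo (Zo r) = fun p => (-1) * Ao (Ao r) p + 1 * Ao r p + 2 * r p := by
    funext p
    have c1 := congrFun S13a p
    have c2 := congrFun (comm_AZ hg3.ao) p
    have c3 := congrFun S13c p
    have c4 := congrFun S13d p
    have c5 := congrFun S13b p
    have c6 := congrFun S6b' p
    linear_combination c1 + c2 + (-1) * c3 + (-1) * c4 + c5 + 2 * c6
  -- S14 (K1), S15
  have S14 : Ao (Ao r) = fun p => 1 * r p := by
    funext p
    have c1 := congrFun S10 p
    have c2 := congrFun S11 p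
    have c3 := congrFun S13 p
    linear_combination (1/2) * c1 + (-1/2) * c2 + (1/2) * c3
  have S15 : Zo (Zo r) = fun p => 1 * Ao r p + 1 * r p := by
    funext p
    have c1 := congrFun S13 p
    have c2 := congrFun S14 p
    linear_combination c1 + (-1) * c2
  -- S16 (M1)
  have S16a : Vo (Wo r) = fun p => (-1) * Vo (Ao (Ao g2)) p + (1/4) * Vo g2 p := by
    rw [S3, Vo_lin2 hg2.ao.ao hg2 (-1) (1/4)]
  have S16b : Vo (Ao g2) = fun p => 1 * Ao (Vo g2) p + (-1/2) * Vo g2 p := by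
    funext p; have c := congrFun (comm_AV hg2) p; linear_combination (-1) * c
  have S16c : Ao (Vo (Ao g2))
      = fun p => 1 * Ao (Ao (Vo g2)) p + (-1/2) * Ao (Vo g2) p := by
    rw [S16b, Ao_lin2 hg2.vo.ao hg2.vo 1 (-1/2)]
  have S16d : Ao (Ao (Vo g2)) = fun p => (1/2) * Ao (Ao g3) p + (1/2) * Ao g3 p := by
    rw [S7', Ao_lin2 hg3.ao hg3 (1/2) (1/2)]
  have S16 : Vo (Wo r) = fun p => (1/2) * Zo r p := by
    funext p
    have c1 := congrFun S16a p
    have c2 := congrFun (comm_AV hg2.ao) p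
    have c3 := congrFun S16c p
    have c4 := congrFun S16d p
    have c5 := congrFun S16b p
    have c6 := congrFun S7' p
    have c7 := congrFun S4 p
    linear_combination c1 + c2 + (-1) * c3 + (-1) * c4 + (1/2) * c5 + c6 + (-1/2) * c7
  -- S17 (N1)
  have S17c : Vo (Zo g1) = fun p => (-1) * Vo (Vo g3) p + (-1) * Vo g2 p := by
    rw [h4, Vo_lin2 hg3.vo hg2 (-1) (-1)]
  have S17a : Zo r
      = fun p => (-1) * Vo (Vo g3) p + 1 * Wo g1 p + (1/2) * Ao g3 p + (1/2) * g3 p := by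
    funext p
    have c1 := congrFun S11f p
    have c2 := congrFun (comm_VZ hg1) p
    have c3 := congrFun S17c p
    have c4 := congrFun h2' p
    have c5 := congrFun h9 p
    linear_combination (-1) * c1 + (-1) * c2 + c3 + (-1) * c4 + (-1/2) * c5
  have S17d : Ao (Zo r)
      = fun p => (-1) * Ao (Vo (Vo g3)) p + 1 * Ao (Wo g1) p
        + (1/2) * Ao (Ao g3) p + (1/2) * Ao g3 p := by
    rw [S17a, Ao_lin4 hg3.vo.vo hg1.wo hg3.ao hg3 (-1) 1 (1/2) (1/2)]
  have S17g : Ao (Vo g3) = fun p => 1 * Vo (Ao g3) p + (1/2) * Vo g3 p := by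
    funext p; have c := congrFun (comm_AV hg3) p; linear_combination c
  have S17h : Vo (Ao (Vo g3))
      = fun p => 1 * Vo (Vo (Ao g3)) p + (1/2) * Vo (Vo g3) p := by
    rw [S17g, Vo_lin2 hg3.ao.vo hg3.vo 1 (1/2)]
  have S17i : Vo (Ao g3) = fun p => (-1) * Vo (Zo g4) p + (-1) * Vo g3 p := by
    rw [h9', Vo_lin2 hg4.zo hg3 (-1) (-1)]
  have S17j : Vo (Vo (Ao g3))
      = fun p => (-1) * Vo (Vo (Zo g4)) p + (-1) * Vo (Vo g3) p := by
    rw [S17i, Vo_lin2 hg4.zo.vo hg3.vo (-1) (-1)]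
  have S17k : Vo (Vo (Zo g4)) = Zo (Vo (Vo g4)) := by
    rw [comm_VZ hg4, comm_VZ hg4.vo]
  have S17l : Zo (Vo (Vo g4)) = fun p => (-1) * Zo (Ao r) p + (-1/2) * Zo r p := by
    rw [S5, Zo_lin2 hr.ao hr (-1) (-1/2)]
  have S17X : Zo (Ao r) = fun p => (-1) * Zo r p := by
    funext p
    have c1 := congrFun S17d p
    have c2 := congrFun (comm_AV hg3.vo) p
    have c3 := congrFun S17h p
    have c4 := congrFun S17j p
    have c5 := congrFun S17k p
    have c6 := congrFun S17l p
    have c7 := congrFun S7 p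
    have c8 := congrFun S4 p
    have c9 := congrFun (comm_AZ hr) p
    linear_combination (1/2) * c1 + (-1/2) * c2 + (-1/2) * c3 + (-1/2) * c4
      + (1/2) * c5 + (1/2) * c6 + (1/2) * c7 + (1/4) * c8 + (-1/2) * c9
  have S17Y : Ao (Zo r) = fun _ => (0:ℝ) := by
    funext p
    have c9 := congrFun (comm_AZ hr) p
    have c11 := congrFun S17X p
    linear_combination c9 + c11
  -- S18
  have S18 : Ao (Zo (Wo r)) = fun p => (1/2) * Zo (Wo r) p := by
    funext p
    have c1 := congrFun (comm_AW hr.zo) p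
    rw [S17Y, Wo_zero, comm_WZ hr] at c1
    simpa using c1
  -- S19 (Q1')
  have S19a : Zo (Wo r) = fun p => (-1) * Zo (Ao (Ao g2)) p + (1/4) * Zo g2 p := by
    rw [S3, Zo_lin2 hg2.ao.ao hg2 (-1) (1/4)]
  have S19b : Zo (Ao g2) = fun p => 1 * Ao (Zo g2) p + (-1) * Zo g2 p := by
    funext p; have c := congrFun (comm_AZ hg2) p; linear_combination (-1) * c
  have S19c : Ao (Zo (Ao g2))
      = fun p => 1 * Ao (Ao (Zo g2)) p + (-1) * Ao (Zo g2) p := by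
    rw [S19b, Ao_lin2 hg2.zo.ao hg2.zo 1 (-1)]
  have S19d : Ao (Ao (Zo g2))
      = fun p => (1/2) * Ao (Ao g1) p + (1/4) * Ao (Wo g3) p + (1/4) * Ao (Zo g2) p := by
    conv_lhs => rw [S8]
    rw [Ao_lin3 hg1.ao hg3.wo hg2.zo (1/2) (1/4) (1/4)]
  have S19 : Zo (Wo r)
      = fun p => (-1/2) * Ao (Ao g1) p + (3/4) * Ao g1 p
        + (3/4) * Wo g3 p + (-1/4) * g1 p := by
    funext p
    have c1 := congrFun S19a p
    have c2 := congrFun (comm_AZ hg2.ao) p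
    have c3 := congrFun S19c p
    have c4 := congrFun S19d p
    have c5 := congrFun S19b p
    have c6 := congrFun S8 p
    have c7 := congrFun S9 p
    have c8 := congrFun h5 p
    linear_combination c1 + c2 + (-1) * c3 + (-1) * c4 + c5 + (7/4) * c6
      + (-1/4) * c7 + (-1/4) * c8
  -- S20 (Q3')
  have S20a : Ao (Zo (Wo r))
      = fun p => (-1/2) * Ao (Ao (Ao g1)) p + (3/4) * Ao (Ao g1) p
        + (3/4) * Ao (Wo g3) p + (-1/4) * Ao g1 p := by
    rw [S19, Ao_lin4 hg1.ao.ao hg1.ao hg3.wo hg1 (-1/2) (3/4) (3/4) (-1/4)]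
  have S20b : Ao (Ao g1) = fun p => (-1) * Vo r p + (1/4) * g1 p := by
    funext p; have c := congrFun S2 p; linear_combination c
  have S20c : Ao (Ao (Ao g1)) = fun p => (-1) * Ao (Vo r) p + (1/4) * Ao g1 p := by
    conv_lhs => rw [S20b]
    rw [Ao_lin2 hr.vo hg1 (-1) (1/4)]
  have S20 : Zo (Wo r) = fun p => 1 * Vo (Ao r) p + (-1) * Vo r p := by
    funext p
    have c1 := congrFun S20a p
    have c2 := congrFun S20c p
    have c3 := congrFun (comm_AV hr) p
    have c4 := congrFun S9 p
    have c5 := congrFun S19 p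
    have c6 := congrFun S18 p
    have c7 := congrFun h5 p
    have c8 := congrFun S20b p
    linear_combination 2 * c1 + (-1) * c2 + c3 + (3/2) * c4 + (-2) * c6
      + (-3/8) * c7 + (3/2) * c8
  -- S21 (Q4)
  have S21a : Zo (Vo (Wo r)) = fun p => (1/2) * Zo (Zo r) p := by
    rw [S16, Zo_lin1 hr.zo (1/2)]
  have S21b : Vo (Zo (Wo r))
      = fun p => 1 * Vo (Vo (Ao r)) p + (-1) * Vo (Vo r) p := by
    rw [S20, Vo_lin2 hr.ao.vo hr.vo 1 (-1)]
  have S21c : Vo (Zo (Wo r)) = Zo (Vo (Wo r)) := comm_VZ hr.wo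
  have S21 : Vo (Vo (Ao r)) = fun p => 1 * Ao r p := by
    funext p
    have c1 := congrFun S21a p
    have c2 := congrFun S21b p
    have c3 := congrFun S21c p
    have c4 := congrFun S15 p
    have c5 := congrFun S10 p
    have c6 := congrFun S14 p
    linear_combination c1 + (-1) * c2 + c3 + (1/2) * c4 + c5 + (-1) * c6
  -- S22 (Q5)
  have S22a : Ao (Vo (Vo r))
      = fun p => (-1) * Ao (Ao (Ao r)) p + (1/2) * Ao (Ao r) p + (1/2) * Ao r p := by
    rw [S10, Ao_lin3 hr.ao.ao hr.ao hr (-1) (1/2) (1/2)]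
  have S22b : Ao (Vo r) = fun p => 1 * Vo (Ao r) p + (1/2) * Vo r p := by
    funext p; have c := congrFun (comm_AV hr) p; linear_combination c
  have S22c : Vo (Ao (Vo r))
      = fun p => 1 * Vo (Vo (Ao r)) p + (1/2) * Vo (Vo r) p := by
    rw [S22b, Vo_lin2 hr.ao.vo hr.vo 1 (1/2)]
  have S22d : Ao (Ao (Ao r)) = fun p => 1 * Ao r p := by
    conv_lhs => rw [S14]
    rw [Ao_lin1 hr 1]
  have S22 : Vo (Vo (Ao r)) = fun p => 1 * r p + (-1) * Ao r p := by
    funext p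
    have c1 := congrFun S22a p
    have c2 := congrFun (comm_AV hr.vo) p
    have c3 := congrFun S22c p
    have c5 := congrFun S22d p
    have c6 := congrFun S14 p
    have c7 := congrFun S10 p
    linear_combination c1 + (-1) * c2 + (-1) * c3 + (-1) * c5 + (3/2) * c6 + (-1) * c7
  -- conclusion
  have S23 : Ao r = fun p => (1/2) * r p := by
    funext p
    have c1 := congrFun S21 p
    have c2 := congrFun S22 p
    linear_combination (-1/2) * c1 + (1/2) * c2
  have S24 : Ao (Ao r) = fun p => (1/2) * Ao r p := by
    conv_lhs => rw [S23]
    rw [Ao_lin1 hr (1/2)]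
  intro p
  have c1 := congrFun S14 p
  have c2 := congrFun S23 p
  have c3 := congrFun S24 p
  linear_combination (-4/3) * c1 + (2/3) * c2 + (4/3) * c3


noncomputable def GG {n : ℕ} (f : FunCHn n) (i : Fin (n - 1)) (x y : Fin (n - 1) → ℝ) :
    E4 → ℝ :=
  fun p => f (Function.update x i p.1) (Function.update y i p.2.1) p.2.2.1 p.2.2.2

lemma sm_GG {n : ℕ} {f : FunCHn n} (hf : SmoothCHn f) (i : Fin (n - 1))
    (x y : Fin (n - 1) → ℝ) : Sm (GG f i x y) := by
  have hΦ : ContDiff ℝ (⊤ : ℕ∞) (fun p : E4 =>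
      ((Function.update x i p.1, Function.update y i p.2.1, p.2.2.1, p.2.2.2) :
        (Fin (n-1) → ℝ) × (Fin (n-1) → ℝ) × ℝ × ℝ)) := by
    apply ContDiff.prodMk
    · exact (contDiff_update _ x i).comp contDiff_fst
    apply ContDiff.prodMk
    · exact (contDiff_update _ y i).comp (contDiff_fst.comp contDiff_snd)
    apply ContDiff.prodMk
    · exact contDiff_fst.comp (contDiff_snd.comp contDiff_snd)
    · exact contDiff_snd.comp (contDiff_snd.comp contDiff_snd)
  exact (hf.of_le (by simp)).comp hΦ

section Slices
variable {h : E4 → ℝ}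

lemma dv_e1_slice (hh : Sm h) (p : E4) :
    Dv e1 h p = deriv (fun w => h (w, p.2.1, p.2.2.1, p.2.2.2)) p.1 := by
  have hl : HasDerivAt (fun w : ℝ => ((w, p.2.1, p.2.2.1, p.2.2.2) : E4)) e1 p.1 :=
    (hasDerivAt_id p.1).prodMk ((hasDerivAt_const _ _).prodMk
      ((hasDerivAt_const _ _).prodMk (hasDerivAt_const _ _)))
  have := ((hh.diffAt p).hasFDerivAt.comp_hasDerivAt p.1 hl)
  exact (this.deriv).symm

lemma dv_e2_slice (hh : Sm h) (p : E4) :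
    Dv e2 h p = deriv (fun w => h (p.1, w, p.2.2.1, p.2.2.2)) p.2.1 := by
  have hl : HasDerivAt (fun w : ℝ => ((p.1, w, p.2.2.1, p.2.2.2) : E4)) e2 p.2.1 :=
    (hasDerivAt_const _ _).prodMk ((hasDerivAt_id _).prodMk
      ((hasDerivAt_const _ _).prodMk (hasDerivAt_const _ _)))
  have := ((hh.diffAt p).hasFDerivAt.comp_hasDerivAt p.2.1 hl)
  exact (this.deriv).symm

lemma dv_e3_slice (hh : Sm h) (p : E4) :
    Dv e3 h p = deriv (fun w => h (p.1, p.2.1, w, p.2.2.2)) p.2.2.1 := by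
  have hl : HasDerivAt (fun w : ℝ => ((p.1, p.2.1, w, p.2.2.2) : E4)) e3 p.2.2.1 :=
    (hasDerivAt_const _ _).prodMk ((hasDerivAt_const _ _).prodMk
      ((hasDerivAt_id _).prodMk (hasDerivAt_const _ _)))
  have := ((hh.diffAt p).hasFDerivAt.comp_hasDerivAt p.2.2.1 hl)
  exact (this.deriv).symm

lemma dv_e4_slice (hh : Sm h) (p : E4) :
    Dv e4 h p = deriv (fun w => h (p.1, p.2.1, p.2.2.1, w)) p.2.2.2 := by
  have hl : HasDerivAt (fun w : ℝ => ((p.1, p.2.1, p.2.2.1, w) : E4)) e4 p.2.2.2 :=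
    (hasDerivAt_const _ _).prodMk ((hasDerivAt_const _ _).prodMk
      ((hasDerivAt_const _ _).prodMk (hasDerivAt_id _)))
  have := ((hh.diffAt p).hasFDerivAt.comp_hasDerivAt p.2.2.2 hl)
  exact (this.deriv).symm

end Slices

section GGder
variable {n : ℕ} {f : FunCHn n}

lemma px_GG (hf : SmoothCHn f) (i : Fin (n - 1)) (x y : Fin (n - 1) → ℝ) (p : E4) :
    Dv e1 (GG f i x y) p
      = pxI f i (Function.update x i p.1) (Function.update y i p.2.1)
          p.2.2.1 p.2.2.2 := by
  rw [dv_e1_slice (sm_GG hf i x y) p]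
  unfold pxI
  rw [Function.update_self]
  congr 1
  funext w
  show f (Function.update x i w) _ _ _ = _
  rw [Function.update_idem]

lemma py_GG (hf : SmoothCHn f) (i : Fin (n - 1)) (x y : Fin (n - 1) → ℝ) (p : E4) :
    Dv e2 (GG f i x y) p
      = pyI f i (Function.update x i p.1) (Function.update y i p.2.1)
          p.2.2.1 p.2.2.2 := by
  rw [dv_e2_slice (sm_GG hf i x y) p]
  unfold pyI
  rw [Function.update_self]
  congr 1
  funext w
  show f _ (Function.update y i w) _ _ = _
  rw [Function.update_idem]

lemma pz_GG (hf : SmoothCHn f) (i : Fin (n - 1)) (x y : Fin (n - 1) → ℝ) (p : E4) :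
    Dv e3 (GG f i x y) p
      = pzN f (Function.update x i p.1) (Function.update y i p.2.1)
          p.2.2.1 p.2.2.2 := by
  rw [dv_e3_slice (sm_GG hf i x y) p]; rfl

lemma pa_GG (hf : SmoothCHn f) (i : Fin (n - 1)) (x y : Fin (n - 1) → ℝ) (p : E4) :
    Dv e4 (GG f i x y) p
      = paN f (Function.update x i p.1) (Function.update y i p.2.1)
          p.2.2.1 p.2.2.2 := by
  rw [dv_e4_slice (sm_GG hf i x y) p]; rfl

end GGder

end

/-- Every conformal vector field on the complex hyperbolic space `ℂHⁿ` (`n ≥ 2`) is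
Killing: if the smooth coefficient functions satisfy the per-index conformal system
for every index `i`, then the potential function `ρ` vanishes identically. -/
theorem conformal_vector_field_on_CHn_is_Killing
    (n : ℕ) (hn : 2 ≤ n)
    (f₁ f₂ : Fin (n - 1) → FunCHn n) (f₃ f₄ ρ : FunCHn n)
    (hf₁ : ∀ i, SmoothCHn (f₁ i)) (hf₂ : ∀ i, SmoothCHn (f₂ i))
    (hf₃ : SmoothCHn f₃) (hf₄ : SmoothCHn f₄) (hρ : SmoothCHn ρ)
    (hsys : ∀ i : Fin (n - 1), PerIndexConformalSystem (f₁ i) (f₂ i) f₃ f₄ ρ i) :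
    ∀ (x y : Fin (n - 1) → ℝ) (z a : ℝ), ρ x y z a = 0 := by
  intro x y z a
  have hi : 0 < n - 1 := by omega
  set i : Fin (n - 1) := ⟨0, hi⟩ with hidef
  set G1 := GG (f₁ i) i x y with hG1
  set G2 := GG (f₂ i) i x y with hG2
  set G3 := GG f₃ i x y with hG3
  set G4 := GG f₄ i x y with hG4
  set GR := GG ρ i x y with hGR
  have H1 : Vo G1 = fun p => 1 * GR p + (1/2) * G4 p := by
    funext p
    have E := (hsys i (Function.update x i p.1) (Function.update y i p.2.1)
      p.2.2.1 p.2.2.2).1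
    rw [Function.update_self, ← px_GG (hf₁ i) i x y p, ← pz_GG (hf₁ i) i x y p] at E
    show Real.exp (p.2.2.2/2) * (Dv e1 G1 p - p.2.1/2 * Dv e3 G1 p)
        = 1 * ρ (Function.update x i p.1) (Function.update y i p.2.1) p.2.2.1 p.2.2.2
          + (1/2) * f₄ (Function.update x i p.1) (Function.update y i p.2.1)
              p.2.2.1 p.2.2.2
    linear_combination (1/2) * E
  have H2 : Wo G1 = fun p => (-1) * Vo G2 p := by
    funext p
    have E := (hsys i (Function.update x i p.1) (Function.update y i p.2.1)
      p.2.2.1 p.2.2.2).2.1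
    rw [Function.update_self, Function.update_self, ← py_GG (hf₁ i) i x y p,
      ← pz_GG (hf₁ i) i x y p, ← px_GG (hf₂ i) i x y p, ← pz_GG (hf₂ i) i x y p] at E
    show Real.exp (p.2.2.2/2) * (Dv e2 G1 p + p.1/2 * Dv e3 G1 p)
        = (-1) * (Real.exp (p.2.2.2/2) * (Dv e1 G2 p - p.2.1/2 * Dv e3 G2 p))
    linear_combination E
  have H3 : Wo G2 = fun p => 1 * GR p + (1/2) * G4 p := by
    funext p
    have E := (hsys i (Function.update x i p.1) (Function.update y i p.2.1)
      p.2.2.1 p.2.2.2).2.2.1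
    rw [Function.update_self, ← py_GG (hf₂ i) i x y p, ← pz_GG (hf₂ i) i x y p] at E
    show Real.exp (p.2.2.2/2) * (Dv e2 G2 p + p.1/2 * Dv e3 G2 p)
        = 1 * ρ (Function.update x i p.1) (Function.update y i p.2.1) p.2.2.1 p.2.2.2
          + (1/2) * f₄ (Function.update x i p.1) (Function.update y i p.2.1)
              p.2.2.1 p.2.2.2
    linear_combination (1/2) * E
  have H4 : Zo G1 = fun p => (-1) * Vo G3 p + (-1) * G2 p := by
    funext p
    have E := (hsys i (Function.update x i p.1) (Function.update y i p.2.1)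
      p.2.2.1 p.2.2.2).2.2.2.1
    rw [Function.update_self, ← pz_GG (hf₁ i) i x y p, ← px_GG hf₃ i x y p,
      ← pz_GG hf₃ i x y p] at E
    show Real.exp p.2.2.2 * Dv e3 G1 p
        = (-1) * (Real.exp (p.2.2.2/2) * (Dv e1 G3 p - p.2.1/2 * Dv e3 G3 p))
          + (-1) * f₂ i (Function.update x i p.1) (Function.update y i p.2.1)
              p.2.2.1 p.2.2.2
    linear_combination E
  have H5 : Zo G2 = fun p => 1 * G1 p + (-1) * Wo G3 p := by
    funext p
    have E := (hsys i (Function.update x i p.1) (Function.update y i p.2.1)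
      p.2.2.1 p.2.2.2).2.2.2.2.1
    rw [Function.update_self, ← pz_GG (hf₂ i) i x y p, ← py_GG hf₃ i x y p,
      ← pz_GG hf₃ i x y p] at E
    show Real.exp p.2.2.2 * Dv e3 G2 p
        = 1 * f₁ i (Function.update x i p.1) (Function.update y i p.2.1)
            p.2.2.1 p.2.2.2
          + (-1) * (Real.exp (p.2.2.2/2) * (Dv e2 G3 p + p.1/2 * Dv e3 G3 p))
    linear_combination E
  have H6 : Zo G3 = fun p => 1 * GR p + 1 * G4 p := by
    funext p
    have E := (hsys i (Function.update x i p.1) (Function.update y i p.2.1)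
      p.2.2.1 p.2.2.2).2.2.2.2.2.1
    rw [← pz_GG hf₃ i x y p] at E
    show Real.exp p.2.2.2 * Dv e3 G3 p
        = 1 * ρ (Function.update x i p.1) (Function.update y i p.2.1) p.2.2.1 p.2.2.2
          + 1 * f₄ (Function.update x i p.1) (Function.update y i p.2.1)
              p.2.2.1 p.2.2.2
    linear_combination E
  have H7 : Vo G4 = fun p => (-1) * Ao G1 p + (-1/2) * G1 p := by
    funext p
    have E := (hsys i (Function.update x i p.1) (Function.update y i p.2.1)
      p.2.2.1 p.2.2.2).2.2.2.2.2.2.1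
    rw [Function.update_self, ← pa_GG (hf₁ i) i x y p, ← px_GG hf₄ i x y p,
      ← pz_GG hf₄ i x y p] at E
    show Real.exp (p.2.2.2/2) * (Dv e1 G4 p - p.2.1/2 * Dv e3 G4 p)
        = (-1) * Dv e4 G1 p
          + (-1/2) * f₁ i (Function.update x i p.1) (Function.update y i p.2.1)
              p.2.2.1 p.2.2.2
    linear_combination E
  have H8 : Wo G4 = fun p => (-1) * Ao G2 p + (-1/2) * G2 p := by
    funext p
    have E := (hsys i (Function.update x i p.1) (Function.update y i p.2.1)
      p.2.2.1 p.2.2.2).2.2.2.2.2.2.2.1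
    rw [Function.update_self, ← pa_GG (hf₂ i) i x y p, ← py_GG hf₄ i x y p,
      ← pz_GG hf₄ i x y p] at E
    show Real.exp (p.2.2.2/2) * (Dv e2 G4 p + p.1/2 * Dv e3 G4 p)
        = (-1) * Dv e4 G2 p
          + (-1/2) * f₂ i (Function.update x i p.1) (Function.update y i p.2.1)
              p.2.2.1 p.2.2.2
    linear_combination E
  have H9 : Zo G4 = fun p => (-1) * Ao G3 p + (-1) * G3 p := by
    funext p
    have E := (hsys i (Function.update x i p.1) (Function.update y i p.2.1)
      p.2.2.1 p.2.2.2).2.2.2.2.2.2.2.2.1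
    rw [← pa_GG hf₃ i x y p, ← pz_GG hf₄ i x y p] at E
    show Real.exp p.2.2.2 * Dv e3 G4 p
        = (-1) * Dv e4 G3 p
          + (-1) * f₃ (Function.update x i p.1) (Function.update y i p.2.1)
              p.2.2.1 p.2.2.2
    linear_combination E
  have H10 : Ao G4 = GR := by
    funext p
    have E := (hsys i (Function.update x i p.1) (Function.update y i p.2.1)
      p.2.2.1 p.2.2.2).2.2.2.2.2.2.2.2.2
    rw [← pa_GG hf₄ i x y p] at E
    exact E
  have hz := core G1 G2 G3 G4 GR (sm_GG (hf₁ i) i x y) (sm_GG (hf₂ i) i x y)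
    (sm_GG hf₃ i x y) (sm_GG hf₄ i x y) (sm_GG hρ i x y)
    H1 H2 H3 H4 H5 H6 H7 H8 H9 H10 (x i, y i, z, a)
  have hz' : ρ (Function.update x i (x i)) (Function.update y i (y i)) z a = 0 := hz
  rwa [Function.update_eq_self, Function.update_eq_self] at hz'
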